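/- arXiv:1012.4767 — 5 statements merged into one kernel-verified Lean document; each statement's English description precedes it below -/
import Mathlib

section
/- Let S and T be disjoint sets of vertices. If f is a flow from S to T with respect to the capacity function c, and f' is a flow from S to T with respect to the residual capacity r_f, then the pointwise sum f + f' is a flow from S to T with respect to c. -/
open scoped Classical

/-- A pseudoflow with respect to capacity `c`: capacity and antisymmetry constraints. -/
def IsPseudoflow {V : Type*} (c f : V → V → ℝ) : Prop :=
  (∀ u v, f u v ≤ c u v) ∧ (∀ u v, f u v = - f v u)

/-- The flow excess of a vertex `v` under `f`. -/
noncomputable def exc {V : Type*} [Fintype V] (f : V → V → ℝ) (v : V) : ℝ :=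
  ∑ u, f u v

/-- A flow from `S` to `T` with respect to `c`. -/
def IsFlow {V : Type*} [Fintype V] (c : V → V → ℝ) (S T : Set V)
    (f : V → V → ℝ) : Prop :=
  IsPseudoflow c f ∧ ∀ v, v ∉ S ∪ T → exc f v = 0

/-- The value of a flow with sink set `T`. -/
noncomputable def flowValue {V : Type*} [Fintype V] (f : V → V → ℝ) (T : Set V) : ℝ :=
  ∑ t ∈ T.toFinset, exc f t

/-- A maximum flow from `S` to `T` with respect to `c`. -/
def IsMaxFlow {V : Type*} [Fintype V] (c : V → V → ℝ) (S T : Set V)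
    (f : V → V → ℝ) : Prop :=
  IsFlow c S T f ∧ ∀ g, IsFlow c S T g → flowValue g T ≤ flowValue f T

/-- The residualCap capacity with respect to pseudoflow `f` and capacity `c`. -/
def residualCap {V : Type*} (c f : V → V → ℝ) : V → V → ℝ :=
  fun u v => c u v - f u v

/-- A residualCap path (w.r.t. capacity `c` and pseudoflow `f`) from a vertex of `A`
to a vertex of `B`; a single vertex in `A ∩ B` counts as such a path. -/
def ResidualPath {V : Type*} (c f : V → V → ℝ) (A B : Set V) : Prop :=
  ∃ (k : ℕ) (p : Fin (k + 1) → V), p 0 ∈ A ∧ p (Fin.last k) ∈ B ∧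
    ∀ i : Fin k, 0 < residualCap c f (p i.castSucc) (p i.succ)

theorem flow_add {V : Type*} [Fintype V] (c f f' : V → V → ℝ) (S T : Set V)
    (hc : ∀ u v, 0 ≤ c u v)
    (hST : Disjoint S T)
    (hf : IsFlow c S T f)
    (hf' : IsFlow (residualCap c f) S T f') :
    IsFlow c S T (fun u v => f u v + f' u v) := by
  obtain ⟨⟨hcap, hanti⟩, hexc⟩ := hf
  obtain ⟨⟨hcap', hanti'⟩, hexc'⟩ := hf'
  refine ⟨⟨fun u v => ?_, fun u v => ?_⟩, fun v hv => ?_⟩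
  · have := hcap' u v
    simp only [residualCap] at this
    simp only []
    linarith
  · simp only []
    rw [hanti u v, hanti' u v]; ring
  · have h1 := hexc v hv
    have h2 := hexc' v hv
    simp only [exc, Finset.sum_add_distrib] at *
    linarith
end

section
/- Let S and T be disjoint sets of vertices, and let S' ⊆ S. If f is a maximum flow from S' to T with respect to the capacity function c, and f' is a maximum flow from S ∖ S' to T with respect to the residual capacity r_f, then f + f' is a maximum flow from S to T with respect to c. -/
open scoped Classical

/-!
Let `A` be the set of vertices reachable from `S'` in the residual graph of `f`, and `B` the set
reachable from `S \ S'` in the residual graph of `f'` taken with respect to `d = r_f`. Since there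
is no augmenting path, `f` saturates every edge leaving `A` (so no `d`-capacity leaves `A`) and
`f'` saturates every edge leaving `B` in `d`. The set `A ∪ B` separates `S` from `T`, so any flow
`g` from `S` to `T` satisfies
  `|g| ≤ c(A ∪ B) = f(A ∪ B) + d(A ∪ B) ≤ f(A ∪ B) + d(B) = f(A ∪ B) + f'(B) = |f| + |f'|`,
writing `h(C)` for the total of `h` over the edges leaving `C`.
-/

open Finset Relation

section Flows

variable {V : Type*}

noncomputable def edgeFlow (u w : V) : V → V → ℝ :=
  fun a b => (if a = u ∧ b = w then 1 else 0) - (if a = w ∧ b = u then 1 else 0)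

lemma edgeFlow_antisymm (u w a b : V) : edgeFlow u w a b = -edgeFlow u w b a := by
  simp only [edgeFlow, and_comm (a := b = u), and_comm (a := b = w)]
  ring

lemma edgeFlow_le_one (u w a b : V) : edgeFlow u w a b ≤ 1 := by
  unfold edgeFlow
  split_ifs <;> norm_num

lemma edgeFlow_nonpos {u w a b : V} (hab : ¬(a = u ∧ b = w)) : edgeFlow u w a b ≤ 0 := by
  unfold edgeFlow
  split_ifs <;> simp_all

lemma IsPseudoflow.residualCap_nonneg {c f : V → V → ℝ} (hf : IsPseudoflow c f) (u v : V) :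
    0 ≤ residualCap c f u v :=
  sub_nonneg.2 (hf.1 u v)

lemma IsPseudoflow.smul_add_edgeFlow {d h : V → V → ℝ} (hd : ∀ u v, 0 ≤ d u v)
    (hh : IsPseudoflow d h) {u w : V} {σ t : ℝ} (hσ : 0 ≤ σ) (ht : 0 ≤ t) (ht1 : t ≤ 1)
    (htuw : t * (h u w + σ) ≤ d u w) :
    IsPseudoflow d (fun a b => t * (h a b + σ * edgeFlow u w a b)) := by
  refine ⟨fun a b => ?_, fun a b => ?_⟩ <;> dsimp only
  · by_cases hab : a = u ∧ b = w
    · rw [hab.1, hab.2]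
      calc t * (h u w + σ * edgeFlow u w u w) ≤ t * (h u w + σ) := by
            gcongr
            exact mul_le_of_le_one_right hσ (edgeFlow_le_one u w u w)
        _ ≤ d u w := htuw
    · calc t * (h a b + σ * edgeFlow u w a b) ≤ t * h a b := by
            gcongr
            exact add_le_of_nonpos_right (mul_nonpos_of_nonneg_of_nonpos hσ (edgeFlow_nonpos hab))
        _ ≤ t * d a b := mul_le_mul_of_nonneg_left (hh.1 a b) ht
        _ ≤ d a b := mul_le_of_le_one_left (hd a b) ht1
  · rw [hh.2 a b, edgeFlow_antisymm]
    ring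

variable [Fintype V]

noncomputable def cutValue (h : V → V → ℝ) (C : Finset V) : ℝ :=
  ∑ u ∈ C, ∑ v ∈ Cᶜ, h u v

def ReceivesFlow (d : V → V → ℝ) (X : Set V) (w : V) : Prop :=
  ∃ h, IsFlow d X {w} h ∧ (w ∉ X → 0 < exc h w)

lemma exc_add (f g : V → V → ℝ) (v : V) : exc (f + g) v = exc f v + exc g v :=
  sum_add_distrib

lemma flowValue_add (f g : V → V → ℝ) (T : Set V) :
    flowValue (f + g) T = flowValue f T + flowValue g T := by
  simp only [flowValue, exc_add, sum_add_distrib]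

lemma exc_smul_add_edgeFlow (h : V → V → ℝ) (σ t : ℝ) (u w v : V) :
    exc (fun a b => t * (h a b + σ * edgeFlow u w a b)) v =
      t * (exc h v + σ * ((if v = w then 1 else 0) - (if v = u then 1 else 0))) := by
  have hedge : exc (edgeFlow u w) v = (if v = w then 1 else 0) - (if v = u then 1 else 0) := by
    simp [exc, edgeFlow, sum_sub_distrib, ite_and]
  rw [← hedge]
  simp only [exc, mul_add, sum_add_distrib, mul_sum]

lemma IsFlow.mono {c f : V → V → ℝ} {X X' Y Y' : Set V} (hf : IsFlow c X Y f)
    (hX : X ⊆ X') (hY : Y ⊆ Y') : IsFlow c X' Y' f :=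
  ⟨hf.1, fun v hv => hf.2 v fun h => hv (Set.union_subset_union hX hY h)⟩

lemma IsFlow.add {c f g : V → V → ℝ} {X Y : Set V} (hf : IsFlow c X Y f)
    (hg : IsFlow (residualCap c f) X Y g) : IsFlow c X Y (f + g) := by
  refine ⟨⟨fun u v => ?_, fun u v => ?_⟩, fun v hv => ?_⟩
  · have := hg.1.1 u v
    simp only [residualCap] at this
    simp only [Pi.add_apply]
    linarith
  · simp only [Pi.add_apply, hf.1.2 u v, hg.1.2 u v]
    ring
  · rw [exc_add, hf.2 v hv, hg.2 v hv, add_zero]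

lemma sum_exc_eq_neg_cutValue {h : V → V → ℝ} (hanti : ∀ u v, h u v = -h v u) (C : Finset V) :
    ∑ v ∈ C, exc h v = -cutValue h C := by
  have hswap : ∀ A B : Finset V, ∑ v ∈ A, ∑ u ∈ B, h u v = -∑ u ∈ A, ∑ v ∈ B, h u v := by
    intro A B
    simp only [← sum_neg_distrib]
    exact sum_congr rfl fun _ _ => sum_congr rfl fun _ _ => hanti _ _
  have hinner : ∑ v ∈ C, ∑ u ∈ C, h u v = 0 := by
    linarith [hswap C C, sum_comm (s := C) (t := C) (f := fun u v => h u v)]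
  have hsplit : ∀ v, exc h v = ∑ u ∈ C, h u v + ∑ u ∈ Cᶜ, h u v := fun v =>
    (sum_add_sum_compl C _).symm
  rw [sum_congr rfl fun v _ => hsplit v, sum_add_distrib, hinner, zero_add, hswap, cutValue]

lemma flowValue_eq_cutValue {c h : V → V → ℝ} {X Y : Set V} {C : Finset V}
    (hh : IsFlow c X Y h) (hXC : X ⊆ C) (hCY : Disjoint (C : Set V) Y) :
    flowValue h Y = cutValue h C := by
  have htotal : ∑ v, exc h v = 0 := by
    simpa [cutValue] using sum_exc_eq_neg_cutValue hh.1.2 univ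
  have hsplit : ∑ v, exc h v = ∑ v ∈ C, exc h v + flowValue h Y := by
    rw [flowValue, ← sum_union (by simpa [← disjoint_coe] using hCY)]
    refine (sum_subset (subset_univ _) fun v _ hv => hh.2 v fun hXY => hv ?_).symm
    rcases hXY with hX | hY
    · exact mem_union_left _ (hXC hX)
    · exact mem_union_right _ (Set.mem_toFinset.2 hY)
  linarith [sum_exc_eq_neg_cutValue hh.1.2 C]

lemma cutValue_mono {f g : V → V → ℝ} (hfg : ∀ u v, f u v ≤ g u v) (C : Finset V) :
    cutValue f C ≤ cutValue g C :=
  sum_le_sum fun u _ => sum_le_sum fun v _ => hfg u v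

lemma cutValue_congr {f g : V → V → ℝ} {C : Finset V} (hfg : ∀ u ∈ C, ∀ v ∉ C, f u v = g u v) :
    cutValue f C = cutValue g C :=
  sum_congr rfl fun u hu => sum_congr rfl fun v hv => hfg u hu v (mem_compl.1 hv)

lemma cutValue_eq_add_residualCap (c f : V → V → ℝ) (C : Finset V) :
    cutValue c C = cutValue f C + cutValue (residualCap c f) C := by
  simp only [cutValue, residualCap, ← sum_add_distrib, add_sub_cancel]

lemma cutValue_union_le {d : V → V → ℝ} (hd : ∀ u v, 0 ≤ d u v) {A : Finset V}
    (hA : ∀ u ∈ A, ∀ v ∉ A, d u v = 0) (B : Finset V) :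
    cutValue d (A ∪ B) ≤ cutValue d B := by
  have hfromA : ∑ u ∈ A, ∑ v ∈ (A ∪ B)ᶜ, d u v = 0 :=
    sum_eq_zero fun u hu => sum_eq_zero fun v hv =>
      hA u hu v fun hvA => (mem_compl.1 hv) (mem_union_left _ hvA)
  have hfromB : ∑ u ∈ B, ∑ v ∈ (A ∪ B)ᶜ, d u v ≤ cutValue d B :=
    sum_le_sum fun u _ => sum_le_sum_of_subset_of_nonneg
      (compl_subset_compl.2 subset_union_right) fun v _ _ => hd u v
  calc cutValue d (A ∪ B)
      ≤ ∑ u ∈ A, ∑ v ∈ (A ∪ B)ᶜ, d u v + ∑ u ∈ B, ∑ v ∈ (A ∪ B)ᶜ, d u v := by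
        rw [cutValue, ← sum_union_inter]
        exact le_add_of_nonneg_right (sum_nonneg fun u _ => sum_nonneg fun v _ => hd u v)
    _ ≤ cutValue d B := by linarith

lemma receivesFlow_of_mem {d : V → V → ℝ} (hd : ∀ u v, 0 ≤ d u v) {X : Set V} {x : V}
    (hx : x ∈ X) : ReceivesFlow d X x :=
  ⟨0, ⟨⟨hd, fun _ _ => by simp⟩, fun v _ => by simp [exc]⟩, fun h => (h hx).elim⟩

/-- Scale the flow into `u` down by `t` to free capacity on `u → w`, then pass on to `w` the
excess `σ` now arriving at `u` (one unit, say, if `u` is a source). -/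
lemma ReceivesFlow.tail {d : V → V → ℝ} (hd : ∀ u v, 0 ≤ d u v) {X : Set V} {u w : V}
    (hu : ReceivesFlow d X u) (huw : 0 < d u w) : ReceivesFlow d X w := by
  obtain ⟨h, hh, hexc⟩ := hu
  set σ : ℝ := if u ∈ X then 1 else exc h u with hσ_def
  have hσ : 0 < σ := by
    by_cases huX : u ∈ X
    · simp [hσ_def, huX]
    · simpa [hσ_def, huX] using hexc huX
  obtain ⟨t, ht, ht1, htuw⟩ : ∃ t : ℝ, 0 < t ∧ t ≤ 1 ∧ t * (h u w + σ) ≤ d u w := by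
    have hK := le_abs_self (h u w + σ)
    refine ⟨d u w / (d u w + |h u w + σ|), by positivity,
      div_le_one_of_le₀ (le_add_of_nonneg_right (abs_nonneg _)) (by positivity), ?_⟩
    rw [div_mul_eq_mul_div, div_le_iff₀ (by positivity)]
    nlinarith
  refine ⟨_, ⟨hh.1.smul_add_edgeFlow hd hσ.le ht.le ht1 htuw, fun v hv => ?_⟩, fun hwX => ?_⟩
  · simp only [Set.mem_union, Set.mem_singleton_iff, not_or] at hv
    rw [exc_smul_add_edgeFlow, if_neg hv.2]
    by_cases hvu : v = u
    · subst hvu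
      simp [hσ_def, hv.1]
    · rw [hh.2 v (by simp [hv.1, hvu]), if_neg hvu]
      ring
  · rw [exc_smul_add_edgeFlow, if_pos rfl]
    by_cases hwu : w = u
    · subst hwu
      simpa using mul_pos ht (hexc hwX)
    · rw [hh.2 w (by simp [hwX, hwu]), if_neg hwu]
      simpa using mul_pos ht hσ

lemma receivesFlow_of_reflTransGen {d : V → V → ℝ} (hd : ∀ u v, 0 ≤ d u v) {X : Set V}
    {x w : V} (hx : x ∈ X) (hxw : ReflTransGen (fun u v => 0 < d u v) x w) :
    ReceivesFlow d X w := by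
  induction hxw with
  | refl => exact receivesFlow_of_mem hd hx
  | tail _ huw ih => exact ih.tail hd huw

/-- The cut is the set of vertices reachable from `X` in the residual graph of `f`. -/
lemma IsMaxFlow.exists_saturated_cut {c f : V → V → ℝ} {X Y : Set V} (hf : IsMaxFlow c X Y f)
    (hXY : Disjoint X Y) :
    ∃ C : Finset V, X ⊆ C ∧ Disjoint (C : Set V) Y ∧ ∀ u ∈ C, ∀ v ∉ C, f u v = c u v := by
  have hd := hf.1.1.residualCap_nonneg
  set R := fun u v => 0 < residualCap c f u v
  refine ⟨univ.filter fun w => ∃ x ∈ X, ReflTransGen R x w, fun x hx => ?_, ?_, ?_⟩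
  · simpa using ⟨x, hx, ReflTransGen.refl⟩
  · refine Set.disjoint_left.2 fun w hwC hwY => ?_
    obtain ⟨x, hx, hxw⟩ := (mem_filter.1 (mem_coe.1 hwC)).2
    have hwX : w ∉ X := fun hwX => Set.disjoint_left.1 hXY hwX hwY
    obtain ⟨h, hh, hexc⟩ := receivesFlow_of_reflTransGen hd hx hxw
    have hvalue : flowValue h Y = exc h w := by
      refine sum_eq_single w (fun v hvY hvw => hh.2 v ?_) (fun hw => (hw (by simpa)).elim)
      simpa [hvw] using fun hvX => Set.disjoint_left.1 hXY hvX (by simpa using hvY)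
    have hle := hf.2 _ (hf.1.add (hh.mono le_rfl (by simpa)))
    rw [flowValue_add, hvalue] at hle
    linarith [hexc hwX]
  · intro u hu v hv
    refine le_antisymm (hf.1.1.1 u v) (not_lt.1 fun hlt => hv ?_)
    obtain ⟨x, hx, hxu⟩ := (mem_filter.1 hu).2
    exact mem_filter.2 ⟨mem_univ v, x, hx, hxu.tail (sub_pos.2 hlt)⟩

end Flows

theorem maxFlow_add_sources_general {V : Type*} [Fintype V] (c f f' : V → V → ℝ)
    (S T S' : Set V)
    (hST : Disjoint S T)
    (hS' : S' ⊆ S)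
    (hf : IsMaxFlow c S' T f)
    (hf' : IsMaxFlow (residualCap c f) (S \ S') T f') :
    IsMaxFlow c S T (fun u v => f u v + f' u v) := by
  obtain ⟨A, hS'A, hAT, hA⟩ := hf.exists_saturated_cut (hST.mono_left hS')
  obtain ⟨B, hB, hBT, hB'⟩ := hf'.exists_saturated_cut (hST.mono_left Set.sdiff_subset)
  have hSC : S ⊆ ↑(A ∪ B) := fun s hs => by
    by_cases hsS' : s ∈ S'
    · exact mem_union_left _ (hS'A hsS')
    · exact mem_union_right _ (hB ⟨hs, hsS'⟩)
  have hCT : Disjoint (↑(A ∪ B) : Set V) T := by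
    rw [coe_union]
    exact hAT.union_left hBT
  refine ⟨(hf.1.mono hS' le_rfl).add (hf'.1.mono Set.sdiff_subset le_rfl), fun g hg => ?_⟩
  calc flowValue g T = cutValue g (A ∪ B) := flowValue_eq_cutValue hg hSC hCT
    _ ≤ cutValue c (A ∪ B) := cutValue_mono hg.1.1 _
    _ = cutValue f (A ∪ B) + cutValue (residualCap c f) (A ∪ B) :=
        cutValue_eq_add_residualCap _ _ _
    _ ≤ cutValue f (A ∪ B) + cutValue (residualCap c f) B := by
        gcongr
        exact cutValue_union_le hf.1.1.residualCap_nonneg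
          (fun u hu v hv => sub_eq_zero.2 (hA u hu v hv).symm) B
    _ = flowValue f T + flowValue f' T := by
        rw [cutValue_congr fun u hu v hv => (hB' u hu v hv).symm,
          flowValue_eq_cutValue hf.1 (hS'A.trans (by simp)) hCT, flowValue_eq_cutValue hf'.1 hB hBT]
    _ = flowValue (f + f') T := (flowValue_add f f' T).symm

theorem maxFlow_add_sources {V : Type*} [Fintype V] (c f f' : V → V → ℝ)
    (S T S' : Set V)
    (hc : ∀ u v, 0 ≤ c u v)
    (hST : Disjoint S T)
    (hS' : S' ⊆ S)
    (hf : IsMaxFlow c S' T f)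
    (hf' : IsMaxFlow (residualCap c f) (S \ S') T f') :
    IsMaxFlow c S T (fun u v => f u v + f' u v) :=
  maxFlow_add_sources_general c f f' S T S' hST hS' hf hf'
end

section
/- Let f be a pseudoflow with respect to the capacity function c, and let S, T, P' ⊆ V be sets of vertices such that there is no residual path with respect to f from any vertex of S to any vertex of T, no residual path from any vertex of S to any vertex of P', and no residual path from any vertex of P' to any vertex of T. Let f' be a pseudoflow with respect to the residual capacity r_f such that exc_{f'}(v) = 0 for every vertex v ∉ P'. Then with respect to the pseudoflow f + f' (and capacity c) there is still no residual path from S to T, no residual path from S to P', and no residual path from P' to T. -/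
open scoped Classical

/-- Extend a residual path by one residual arc. -/
lemma reach_step {V : Type*} (c f : V → V → ℝ) (A : Set V) (v w : V)
    (h : ResidualPath c f A {v}) (hr : 0 < residualCap c f v w) :
    ResidualPath c f A {w} := by
  obtain ⟨k, p, h0, hlast, harc⟩ := h
  have hv : p (Fin.last k) = v := hlast
  refine ⟨k + 1, Fin.snoc p w, ?_, ?_, ?_⟩
  · rw [show (0 : Fin (k + 2)) = Fin.castSucc 0 by simp, Fin.snoc_castSucc]
    exact h0
  · simp [Fin.snoc_last]
  · intro i
    induction i using Fin.lastCases with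
    | last =>
      rw [Fin.succ_last, Fin.snoc_last, Fin.snoc_castSucc, hv]
      exact hr
    | cast j =>
      rw [Fin.succ_castSucc, Fin.snoc_castSucc, Fin.snoc_castSucc]
      exact harc j

/-- If a source set is contained in a set closed under residual arcs that avoids
the target set, there is no residual path from source to target. -/
lemma no_residual_path {V : Type*} (c g : V → V → ℝ) (Src Tgt A : Set V)
    (hS : Src ⊆ A)
    (hcl : ∀ v w, v ∈ A → 0 < residualCap c g v w → w ∈ A)
    (hT : ∀ v ∈ A, v ∉ Tgt) : ¬ ResidualPath c g Src Tgt := by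
  rintro ⟨k, p, h0, hlast, harc⟩
  have hall : ∀ i : Fin (k + 1), p i ∈ A := by
    intro i
    induction i using Fin.induction with
    | zero => exact hS h0
    | succ j ih => exact hcl _ _ ih (harc j)
  exact hT _ (hall (Fin.last k)) hlast

lemma sum_antisymm_zero {V : Type*} (f' : V → V → ℝ) (ha : ∀ u v, f' u v = - f' v u)
    (s : Finset V) : ∑ u ∈ s, ∑ v ∈ s, f' u v = 0 := by
  have h : ∑ u ∈ s, ∑ v ∈ s, f' u v = ∑ v ∈ s, ∑ u ∈ s, f' u v :=
    Finset.sum_comm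
  have h2 : ∑ v ∈ s, ∑ u ∈ s, f' u v = - ∑ u ∈ s, ∑ v ∈ s, f' u v := by
    rw [← Finset.sum_neg_distrib]
    refine Finset.sum_congr rfl fun v _ => ?_
    rw [← Finset.sum_neg_distrib]
    exact Finset.sum_congr rfl fun u _ => ha u v
  linarith

lemma cut_zero {V : Type*} [Fintype V] (f' : V → V → ℝ)
    (ha : ∀ u v, f' u v = - f' v u) (B : Set V)
    (hle : ∀ u v, u ∈ B → v ∉ B → f' u v ≤ 0)
    (hsum : ∑ w ∈ Finset.univ.filter (fun w => w ∉ B), exc f' w = 0) :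
    ∀ u v, u ∈ B → v ∉ B → f' u v = 0 := by
  classical
  set Bf := Finset.univ.filter (fun w : V => w ∈ B) with hBf
  set Bc := Finset.univ.filter (fun w : V => w ∉ B) with hBc
  have hpart : ∀ g : V → ℝ, ∑ w ∈ Bf, g w + ∑ w ∈ Bc, g w = ∑ w, g w := fun g =>
    Finset.sum_filter_add_sum_filter_not Finset.univ _ g
  have h1 : ∑ w ∈ Bc, exc f' w
      = ∑ w ∈ Bc, ∑ u ∈ Bf, f' u w + ∑ w ∈ Bc, ∑ u ∈ Bc, f' u w := by
    rw [← Finset.sum_add_distrib]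
    refine Finset.sum_congr rfl fun w _ => ?_
    rw [exc, ← hpart (fun u => f' u w)]
  have h2 : ∑ w ∈ Bc, ∑ u ∈ Bc, f' u w = 0 :=
    sum_antisymm_zero (fun a b => f' b a) (fun u v => ha v u) Bc
  have hkey : ∑ w ∈ Bc, ∑ u ∈ Bf, f' u w = 0 := by
    rw [h1, h2] at hsum; linarith
  have hnonpos : ∀ w ∈ Bc, ∑ u ∈ Bf, f' u w ≤ 0 := by
    intro w hw
    apply Finset.sum_nonpos
    intro u hu
    refine hle u w ?_ ?_
    · simpa [hBf] using hu
    · simpa [hBc] using hw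
  intro u v hu hv
  have hvBc : v ∈ Bc := by simp [hBc, hv]
  have huBf : u ∈ Bf := by simp [hBf, hu]
  have e1 := (Finset.sum_eq_zero_iff_of_nonpos hnonpos).mp hkey v hvBc
  have hnp2 : ∀ u' ∈ Bf, f' u' v ≤ 0 := by
    intro u' hu'
    exact hle u' v (by simpa [hBf] using hu') hv
  exact (Finset.sum_eq_zero_iff_of_nonpos hnp2).mp e1 u huBf

theorem invariant_preserved_add {V : Type*} [Fintype V] (c f f' : V → V → ℝ)
    (S T P' : Set V)
    (hc : ∀ u v, 0 ≤ c u v)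
    (hf : IsPseudoflow c f)
    (hST : ¬ ResidualPath c f S T)
    (hSP : ¬ ResidualPath c f S P')
    (hPT : ¬ ResidualPath c f P' T)
    (hf' : IsPseudoflow (residualCap c f) f')
    (hexc : ∀ v, v ∉ P' → exc f' v = 0) :
    ¬ ResidualPath c (fun u v => f u v + f' u v) S T ∧
    ¬ ResidualPath c (fun u v => f u v + f' u v) S P' ∧
    ¬ ResidualPath c (fun u v => f u v + f' u v) P' T := by
  classical
  set A : Set V := {v | ResidualPath c f S {v}} with hA
  set A' : Set V := {v | ResidualPath c f P' {v}} with hA'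
  have hanti := hf'.2
  -- basic containments
  have hSA : S ⊆ A := by
    intro s hs
    exact ⟨0, fun _ => s, hs, rfl, fun i => i.elim0⟩
  have hPA' : P' ⊆ A' := by
    intro s hs
    exact ⟨0, fun _ => s, hs, rfl, fun i => i.elim0⟩
  -- A avoids T and P', A' avoids T
  have hAT : ∀ v ∈ A, v ∉ T := by
    rintro v ⟨k, p, h0, hlast, harc⟩ hvT
    exact hST ⟨k, p, h0, hlast ▸ hvT, harc⟩
  have hAP : ∀ v ∈ A, v ∉ P' := by
    rintro v ⟨k, p, h0, hlast, harc⟩ hvP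
    exact hSP ⟨k, p, h0, hlast ▸ hvP, harc⟩
  have hA'T : ∀ v ∈ A', v ∉ T := by
    rintro v ⟨k, p, h0, hlast, harc⟩ hvT
    exact hPT ⟨k, p, h0, hlast ▸ hvT, harc⟩
  -- closure under f-residual arcs, hence residual caps across boundary are ≤ 0
  have hnoarcA : ∀ v w, v ∈ A → w ∉ A → residualCap c f v w ≤ 0 := by
    intro v w hv hw
    by_contra h
    exact hw (reach_step c f S v w hv (lt_of_not_ge h))
  have hnoarcA' : ∀ v w, v ∈ A' → w ∉ A' → residualCap c f v w ≤ 0 := by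
    intro v w hv hw
    by_contra h
    exact hw (reach_step c f P' v w hv (lt_of_not_ge h))
  have hleA : ∀ u v, u ∈ A → v ∉ A → f' u v ≤ 0 := fun u v hu hv =>
    le_trans (hf'.1 u v) (hnoarcA u v hu hv)
  have hleA' : ∀ u v, u ∈ A' → v ∉ A' → f' u v ≤ 0 := fun u v hu hv =>
    le_trans (hf'.1 u v) (hnoarcA' u v hu hv)
  -- excess sums
  have hsumA' : ∑ w ∈ Finset.univ.filter (fun w => w ∉ A'), exc f' w = 0 := by
    apply Finset.sum_eq_zero
    intro w hw
    simp only [Finset.mem_filter] at hw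
    exact hexc w (fun hwP => hw.2 (hPA' hwP))
  have cutA' : ∀ u v, u ∈ A' → v ∉ A' → f' u v = 0 :=
    cut_zero f' hanti A' hleA' hsumA'
  have htot : ∑ w, exc f' w = 0 := by
    simp only [exc]
    rw [Finset.sum_comm]
    exact sum_antisymm_zero f' hanti Finset.univ
  have hsumA'in : ∑ w ∈ Finset.univ.filter (fun w => w ∈ A'), exc f' w = 0 := by
    have := Finset.sum_filter_add_sum_filter_not Finset.univ
      (fun w => w ∈ A') (exc f')
    rw [htot] at this
    have h2 : ∑ w ∈ Finset.univ.filter (fun w => ¬ w ∈ A'), exc f' w = 0 := hsumA'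
    linarith
  have hsumA : ∑ w ∈ Finset.univ.filter (fun w => w ∉ A), exc f' w = 0 := by
    have e1 : ∑ w ∈ Finset.univ.filter (fun w => w ∉ A), exc f' w
        = ∑ w ∈ Finset.univ.filter (fun w => w ∈ P'), exc f' w := by
      rw [Finset.sum_filter, Finset.sum_filter]
      refine Finset.sum_congr rfl fun w _ => ?_
      by_cases hw : w ∈ P'
      · have : w ∉ A := fun hwA => hAP w hwA hw
        simp [hw, this]
      · simp [hw, hexc w hw]
    have e2 : ∑ w ∈ Finset.univ.filter (fun w => w ∈ A'), exc f' w
        = ∑ w ∈ Finset.univ.filter (fun w => w ∈ P'), exc f' w := by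
      rw [Finset.sum_filter, Finset.sum_filter]
      refine Finset.sum_congr rfl fun w _ => ?_
      by_cases hw : w ∈ P'
      · simp [hw, hPA' hw]
      · simp [hw, hexc w hw]
    rw [e1, ← e2, hsumA'in]
  have cutA : ∀ u v, u ∈ A → v ∉ A → f' u v = 0 :=
    cut_zero f' hanti A hleA hsumA
  -- closure under (f + f')-residual arcs
  have hclA : ∀ v w, v ∈ A →
      0 < residualCap c (fun u v => f u v + f' u v) v w → w ∈ A := by
    intro v w hv hr
    by_contra hw
    have h0 : f' v w = 0 := cutA v w hv hw
    have h1 : residualCap c f v w ≤ 0 := hnoarcA v w hv hw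
    simp only [residualCap] at hr h1
    linarith
  have hclA' : ∀ v w, v ∈ A' →
      0 < residualCap c (fun u v => f u v + f' u v) v w → w ∈ A' := by
    intro v w hv hr
    by_contra hw
    have h0 : f' v w = 0 := cutA' v w hv hw
    have h1 : residualCap c f v w ≤ 0 := hnoarcA' v w hv hw
    simp only [residualCap] at hr h1
    linarith
  refine ⟨no_residual_path c _ S T A hSA hclA hAT,
    no_residual_path c _ S P' A hSA hclA hAP,
    no_residual_path c _ P' T A' hPA' hclA' hA'T⟩
end

section
/- Let X, Y ⊆ V with X ∪ Y = V and X ∩ Y = P, and let S ⊆ X ∖ P and T ⊆ Y ∖ P with S ∩ T = ∅. Let c_X and c_Y be capacity functions such that c_X(u,v) = 0 whenever u ∉ X or v ∉ X, c_Y(u,v) = 0 whenever u ∉ Y or v ∉ Y, and for every pair of vertices u, v, either c_X(u,v) = c_X(v,u) = 0 or c_Y(u,v) = c_Y(v,u) = 0 (the pieces are edge-disjoint). Let c = c_X + c_Y. If f_X is a maximum flow from S to P with respect to c_X and f_Y is a maximum flow from P to T with respect to c_Y, then f = f_X + f_Y is a pseudoflow with respect to c such that exc_f(v) = 0 for every v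 ∉ S ∪ P ∪ T, and with respect to f (and capacity c) there is no residual path from any vertex of S to any vertex of P, no residual path from any vertex of P to any vertex of T, and no residual path from any vertex of S to any vertex of T. -/
open scoped Classical

/-- Auxiliary: a maximum flow admits no residual (augmenting) path from `S` to `T`,
provided `S` and `T` are disjoint. -/
lemma no_aug {V : Type*} [Fintype V] (c f : V → V → ℝ) (S T : Set V)
    (hST : ∀ v, v ∈ S → v ∉ T) (hmax : IsMaxFlow c S T f) :
    ¬ ResidualPath c f S T := by
  rintro ⟨k, p, h0, hl, hr⟩
  rcases Nat.eq_zero_or_pos k with hk | hk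
  · subst hk
    exact hST (p 0) h0 (by simpa [Fin.last] using hl)
  obtain ⟨⟨hcap, hanti⟩, hexcf⟩ := hmax.1
  have hne : (Finset.univ : Finset (Fin k)).Nonempty := by
    have : Nonempty (Fin k) := ⟨⟨0, hk⟩⟩
    exact Finset.univ_nonempty
  set m := Finset.univ.inf' hne (fun i : Fin k => residualCap c f (p i.castSucc) (p i.succ))
    with hm
  have hmpos : 0 < m := by
    rw [hm, Finset.lt_inf'_iff]
    intro i _; exact hr i
  have hmle : ∀ i : Fin k, m ≤ residualCap c f (p i.castSucc) (p i.succ) :=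
    fun i => Finset.inf'_le _ (Finset.mem_univ i)
  set ε := m / k with hε
  have hkpos : (0:ℝ) < k := by exact_mod_cast hk
  have hεpos : 0 < ε := div_pos hmpos hkpos
  have hεk : ε * k = m := div_mul_cancel₀ m (ne_of_gt hkpos)
  set N : V → V → ℝ :=
    fun u v => ∑ i : Fin k, if p i.castSucc = u ∧ p i.succ = v then (1:ℝ) else 0 with hN
  have hN0 : ∀ u v, 0 ≤ N u v := by
    intro u v; apply Finset.sum_nonneg; intro i _; positivity
  have hNk : ∀ u v, N u v ≤ k := by
    intro u v
    calc N u v ≤ ∑ _i : Fin k, (1:ℝ) := by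
          apply Finset.sum_le_sum; intro i _; split <;> norm_num
      _ = k := by simp
  set g : V → V → ℝ := fun u v => f u v + ε * (N u v - N v u) with hg
  have hsum1 : ∀ v, ∑ u, N u v = ∑ i : Fin k, if p i.succ = v then (1:ℝ) else 0 := by
    intro v
    rw [hN]
    rw [Finset.sum_comm]
    apply Finset.sum_congr rfl
    intro i _
    by_cases h : p i.succ = v
    · simp [h, Finset.sum_ite_eq]
    · simp [h]
  have hsum2 : ∀ v, ∑ u, N v u = ∑ i : Fin k, if p i.castSucc = v then (1:ℝ) else 0 := by
    intro v
    rw [hN]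
    rw [Finset.sum_comm]
    apply Finset.sum_congr rfl
    intro i _
    by_cases h : p i.castSucc = v
    · simp [h, Finset.sum_ite_eq]
    · simp [h]
  have htel : ∀ v,
      (∑ i : Fin k, if p i.succ = v then (1:ℝ) else 0)
        - (∑ i : Fin k, if p i.castSucc = v then (1:ℝ) else 0)
      = (if p (Fin.last k) = v then (1:ℝ) else 0) - (if p 0 = v then (1:ℝ) else 0) := by
    intro v
    have h1 : ∑ j : Fin (k+1), (if p j = v then (1:ℝ) else 0)
        = (if p 0 = v then (1:ℝ) else 0) + ∑ i : Fin k, (if p i.succ = v then (1:ℝ) else 0) :=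
      Fin.sum_univ_succ _
    have h2 : ∑ j : Fin (k+1), (if p j = v then (1:ℝ) else 0)
        = (∑ i : Fin k, (if p i.castSucc = v then (1:ℝ) else 0))
          + (if p (Fin.last k) = v then (1:ℝ) else 0) :=
      Fin.sum_univ_castSucc _
    linarith
  have hexcg : ∀ v, exc g v = exc f v
      + ε * ((if p (Fin.last k) = v then (1:ℝ) else 0) - (if p 0 = v then (1:ℝ) else 0)) := by
    intro v
    have : exc g v = ∑ u, (f u v + ε * (N u v - N v u)) := rfl
    rw [this, Finset.sum_add_distrib, ← Finset.mul_sum]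
    have : ∑ u, (N u v - N v u) = (∑ u, N u v) - (∑ u, N v u) := by
      rw [Finset.sum_sub_distrib]
    rw [this, hsum1, hsum2, htel]
    rfl
  have hgcap : ∀ u v, g u v ≤ c u v := by
    intro u v
    by_cases h : ∃ i : Fin k, p i.castSucc = u ∧ p i.succ = v
    · obtain ⟨i, hi1, hi2⟩ := h
      have hr1 : m ≤ c u v - f u v := by
        have := hmle i; rw [hi1, hi2] at this; exact this
      have h2 : ε * (N u v - N v u) ≤ ε * k := by
        apply mul_le_mul_of_nonneg_left _ hεpos.le
        have := hN0 v u; have := hNk u v; linarith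
      have : g u v = f u v + ε * (N u v - N v u) := rfl
      rw [this]; rw [hεk] at h2; linarith
    · push_neg at h
      have hz : N u v = 0 := by
        apply Finset.sum_eq_zero; intro i _
        rw [if_neg]; rintro ⟨a, b⟩; exact h i a b
      have h1 := hN0 v u
      have h2 := hcap u v
      have : g u v = f u v + ε * (N u v - N v u) := rfl
      rw [this, hz]
      nlinarith
  have hganti : ∀ u v, g u v = - g v u := by
    intro u v
    have h1 := hanti u v
    have : g u v = f u v + ε * (N u v - N v u) := rfl
    rw [this]
    have : g v u = f v u + ε * (N v u - N u v) := rfl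
    rw [this]
    linarith [mul_sub ε (N u v) (N v u), mul_sub ε (N v u) (N u v)]
  have hgflow : IsFlow c S T g := by
    refine ⟨⟨hgcap, hganti⟩, ?_⟩
    intro v hv
    rw [hexcg v]
    have h1 : p 0 ≠ v := fun h => hv (Or.inl (h ▸ h0))
    have h2 : p (Fin.last k) ≠ v := fun h => hv (Or.inr (h ▸ hl))
    rw [if_neg h1, if_neg h2, hexcf v hv]
    ring
  have hval : flowValue g T = flowValue f T + ε := by
    unfold flowValue
    rw [Finset.sum_congr rfl (fun t _ => hexcg t), Finset.sum_add_distrib, ← Finset.mul_sum]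
    have e1 : ∑ t ∈ T.toFinset,
        ((if p (Fin.last k) = t then (1:ℝ) else 0) - (if p 0 = t then (1:ℝ) else 0))
        = 1 := by
      rw [Finset.sum_sub_distrib, Finset.sum_ite_eq, Finset.sum_ite_eq]
      rw [if_pos (Set.mem_toFinset.mpr hl), if_neg]
      · ring
      · rw [Set.mem_toFinset]; exact hST _ h0
    rw [e1, mul_one]
  have := hmax.2 g hgflow
  rw [hval] at this
  linarith

theorem two_piece_pseudoflow {V : Type*} [Fintype V]
    (cX cY : V → V → ℝ) (fX fY : V → V → ℝ) (X Y S T : Set V)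
    (hXY : X ∪ Y = Set.univ)
    (hS : S ⊆ X \ (X ∩ Y)) (hT : T ⊆ Y \ (X ∩ Y))
    (hST : S ∩ T = ∅)
    (hcX : ∀ u v, 0 ≤ cX u v) (hcY : ∀ u v, 0 ≤ cY u v)
    (hcX0 : ∀ u v, u ∉ X ∨ v ∉ X → cX u v = 0)
    (hcY0 : ∀ u v, u ∉ Y ∨ v ∉ Y → cY u v = 0)
    (hdisj : ∀ u v, (cX u v = 0 ∧ cX v u = 0) ∨ (cY u v = 0 ∧ cY v u = 0))
    (hfX : IsMaxFlow cX S (X ∩ Y) fX)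
    (hfY : IsMaxFlow cY (X ∩ Y) T fY) :
    IsPseudoflow (fun u v => cX u v + cY u v) (fun u v => fX u v + fY u v) ∧
    (∀ v, v ∉ S ∪ (X ∩ Y) ∪ T → exc (fun u v => fX u v + fY u v) v = 0) ∧
    ¬ ResidualPath (fun u v => cX u v + cY u v) (fun u v => fX u v + fY u v) S (X ∩ Y) ∧
    ¬ ResidualPath (fun u v => cX u v + cY u v) (fun u v => fX u v + fY u v) (X ∩ Y) T ∧
    ¬ ResidualPath (fun u v => cX u v + cY u v) (fun u v => fX u v + fY u v) S T := by
  obtain ⟨⟨hXcap, hXanti⟩, hXexc⟩ := hfX.1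
  obtain ⟨⟨hYcap, hYanti⟩, hYexc⟩ := hfY.1
  set c : V → V → ℝ := fun u v => cX u v + cY u v with hc
  set f : V → V → ℝ := fun u v => fX u v + fY u v with hf
  have memX : ∀ v, v ∉ Y → v ∈ X := by
    intro v hv
    have : v ∈ X ∪ Y := hXY ▸ Set.mem_univ v
    rcases this with h | h
    · exact h
    · exact absurd h hv
  have hSnY : ∀ v, v ∈ S → v ∉ Y := by
    intro v hv hvy
    exact (hS hv).2 ⟨(hS hv).1, hvy⟩
  have hTnX : ∀ v, v ∈ T → v ∉ X := by
    intro v hv hvx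
    exact (hT hv).2 ⟨hvx, (hT hv).1⟩
  have pfzX : ∀ u v, cX u v = 0 → cX v u = 0 → fX u v = 0 := by
    intro u v h1 h2
    have a := hXcap u v; have b := hXcap v u; have d := hXanti u v
    linarith
  have pfzY : ∀ u v, cY u v = 0 → cY v u = 0 → fY u v = 0 := by
    intro u v h1 h2
    have a := hYcap u v; have b := hYcap v u; have d := hYanti u v
    linarith
  have hrXmem : ∀ u v, 0 < residualCap cX fX u v → u ∈ X ∧ v ∈ X := by
    intro u v h
    by_contra hcon
    have h1 : cX u v = 0 := hcX0 u v (by tauto)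
    have h2 : cX v u = 0 := hcX0 v u (by tauto)
    have := pfzX u v h1 h2
    unfold residualCap at h
    linarith
  have hrYmem : ∀ u v, 0 < residualCap cY fY u v → u ∈ Y ∧ v ∈ Y := by
    intro u v h
    by_contra hcon
    have h1 : cY u v = 0 := hcY0 u v (by tauto)
    have h2 : cY v u = 0 := hcY0 v u (by tauto)
    have := pfzY u v h1 h2
    unfold residualCap at h
    linarith
  have hsplit : ∀ u v, 0 < residualCap c f u v →
      0 < residualCap cX fX u v ∨ 0 < residualCap cY fY u v := by
    intro u v h
    by_contra hcon
    push_neg at hcon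
    have e : residualCap c f u v = residualCap cX fX u v + residualCap cY fY u v := by
      simp [residualCap, hc, hf]; ring
    rw [e] at h
    linarith [hcon.1, hcon.2]
  have hA : ¬ ResidualPath cX fX S (X ∩ Y) :=
    no_aug cX fX S (X ∩ Y) (fun v hv => (hS hv).2) hfX
  have hB : ¬ ResidualPath cY fY (X ∩ Y) T :=
    no_aug cY fY (X ∩ Y) T (fun v hv hvt => (hT hvt).2 hv) hfY
  have key1 : ∀ (k : ℕ) (p : Fin (k+1) → V), p 0 ∈ S →
      (∀ i : Fin k, 0 < residualCap c f (p i.castSucc) (p i.succ)) →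
      ∀ j, (hj : j ≤ k) → p ⟨j, by omega⟩ ∉ Y ∧
        ∀ a b (ha : a < k+1) (hb : b < k+1), a < j → b = a + 1 →
          0 < residualCap cX fX (p ⟨a, ha⟩) (p ⟨b, hb⟩) := by
    intro k p h0 hr j
    have pval : ∀ (a : ℕ) (ha : a < k+1) (i : Fin (k+1)), a = i.val → p ⟨a, ha⟩ = p i := by
      rintro a ha i h
      congr 1
      exact Fin.ext h
    induction j with
    | zero =>
      intro hj
      refine ⟨?_, ?_⟩
      · rw [pval 0 (by omega) 0 (by simp)]
        exact hSnY _ h0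
      · intro a b ha hb hlt; omega
    | succ j ih =>
      intro hj
      have hj' : j ≤ k := by omega
      obtain ⟨hpj, harcs⟩ := ih hj'
      have hpjX : p ⟨j, by omega⟩ ∈ X := memX _ hpj
      have harc : 0 < residualCap c f (p ⟨j, by omega⟩) (p ⟨j+1, by omega⟩) :=
        hr ⟨j, by omega⟩
      rcases hsplit _ _ harc with hXa | hYa
      · have hmem := hrXmem _ _ hXa
        have hnext : p ⟨j+1, by omega⟩ ∉ Y := by
          intro hY1
          apply hA
          refine ⟨j+1, fun i => p ⟨i.val, by have := i.isLt; omega⟩, ?_, ?_, ?_⟩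
          · show p ⟨((0 : Fin (j+2))).val, by omega⟩ ∈ S
            rw [pval _ _ 0 (by simp)]
            exact h0
          · show p ⟨((Fin.last (j+1))).val, by omega⟩ ∈ X ∩ Y
            rw [pval _ (by omega) ⟨j+1, by omega⟩ (by simp)]
            exact ⟨hmem.2, hY1⟩
          · intro i
            show 0 < residualCap cX fX (p ⟨((i.castSucc)).val, by have := i.isLt; omega⟩)
                (p ⟨((i.succ)).val, by have := i.isLt; omega⟩)
            rcases Nat.lt_succ_iff_lt_or_eq.mp i.isLt with hlt | heq
            · exact harcs i.val (i.val+1) (by have := i.isLt; omega) (by have := i.isLt; omega)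
                hlt rfl
            · rw [pval (↑i.castSucc) (by have := i.isLt; simp only [Fin.coe_castSucc]; omega)
                    ⟨j, by omega⟩ (by show (i:ℕ) = j; omega),
                  pval (↑i.succ) (by have := i.isLt; simp only [Fin.val_succ]; omega)
                    ⟨j+1, by omega⟩ (by show (i:ℕ)+1 = j+1; omega)]
              exact hXa
        refine ⟨hnext, ?_⟩
        intro a b ha hb hlt hba
        rcases Nat.lt_succ_iff_lt_or_eq.mp hlt with h1 | h1
        · exact harcs a b ha hb h1 hba
        · rw [pval a ha ⟨j, by omega⟩ (by show a = j; omega),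
              pval b hb ⟨j+1, by omega⟩ (by show b = j+1; omega)]
          exact hXa
      · exfalso
        exact hpj (hrYmem _ _ hYa).1
  have noSY : ∀ (B : Set V), B ⊆ Y → ¬ ResidualPath c f S B := by
    rintro B hBY ⟨k, p, h0, hl, hr⟩
    have hk := (key1 k p h0 hr k le_rfl).1
    apply hk
    have e : p (⟨k, by omega⟩ : Fin (k+1)) = p (Fin.last k) := by
      congr 1
    rw [e]
    exact hBY hl
  have key2 : ∀ (k : ℕ) (p : Fin (k+1) → V), p (Fin.last k) ∈ T →
      (∀ i : Fin k, 0 < residualCap c f (p i.castSucc) (p i.succ)) →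
      ∀ j, (hj : j ≤ k) → p ⟨k - j, by omega⟩ ∉ X ∧
        ∀ a b (ha : a < k+1) (hb : b < k+1), k - j ≤ a → a < k → b = a + 1 →
          0 < residualCap cY fY (p ⟨a, ha⟩) (p ⟨b, hb⟩) := by
    intro k p hl hr j
    have pval : ∀ (a : ℕ) (ha : a < k+1) (i : Fin (k+1)), a = i.val → p ⟨a, ha⟩ = p i := by
      rintro a ha i h
      congr 1
      exact Fin.ext h
    induction j with
    | zero =>
      intro hj
      refine ⟨?_, ?_⟩
      · rw [pval _ (by omega) (Fin.last k) (by simp)]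
        exact hTnX _ hl
      · intro a b ha hb h1 h2 h3; omega
    | succ j ih =>
      intro hj
      have hj' : j ≤ k := by omega
      obtain ⟨hpn, harcs⟩ := ih hj'
      have hn1 : 1 ≤ k - j := by omega
      have harc : 0 < residualCap c f (p ⟨k - j - 1, by omega⟩) (p ⟨k - j, by omega⟩) := by
        rw [pval (k-j-1) (by omega) ((⟨k-j-1, by omega⟩ : Fin k).castSucc)
              (by show k-j-1 = k-j-1; rfl),
            pval (k-j) (by omega) ((⟨k-j-1, by omega⟩ : Fin k).succ)
              (by show k-j = k-j-1+1; omega)]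
        exact hr ⟨k-j-1, by omega⟩
      have hpnY : 0 < residualCap cY fY (p ⟨k - j - 1, by omega⟩) (p ⟨k - j, by omega⟩) := by
        rcases hsplit _ _ harc with hXa | hYa
        · exact absurd (hrXmem _ _ hXa).2 hpn
        · exact hYa
      have hprev : p ⟨k - j - 1, by omega⟩ ∉ X := by
        intro hX1
        apply hB
        have hprevY : p ⟨k - j - 1, by omega⟩ ∈ Y := (hrYmem _ _ hpnY).1
        refine ⟨j+1, fun i => p ⟨k - j - 1 + i.val, by have := i.isLt; omega⟩, ?_, ?_, ?_⟩
        · show p ⟨k - j - 1 + ((0 : Fin (j+2))).val, by omega⟩ ∈ X ∩ Y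
          rw [pval _ (by omega) ⟨k - j - 1, by omega⟩ (by simp)]
          exact ⟨hX1, hprevY⟩
        · show p ⟨k - j - 1 + ((Fin.last (j+1))).val, by omega⟩ ∈ T
          rw [pval _ (by omega) (Fin.last k) (by simp; omega)]
          exact hl
        · intro i
          show 0 < residualCap cY fY
              (p ⟨k - j - 1 + ((i.castSucc)).val, by have := i.isLt; omega⟩)
              (p ⟨k - j - 1 + ((i.succ)).val, by have := i.isLt; omega⟩)
          rcases Nat.eq_zero_or_pos i.val with h0i | h0i
          · rw [pval (k - j - 1 + ↑i.castSucc)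
                  (by have := i.isLt; simp only [Fin.coe_castSucc]; omega)
                  ⟨k - j - 1, by omega⟩ (by show k-j-1+(i:ℕ) = k-j-1; omega),
                pval (k - j - 1 + ↑i.succ)
                  (by have := i.isLt; simp only [Fin.val_succ]; omega)
                  ⟨k - j, by omega⟩ (by show k-j-1+((i:ℕ)+1) = k-j; omega)]
            exact hpnY
          · have hh := harcs (k - j - 1 + i.val) (k - j - 1 + i.val + 1)
              (by have := i.isLt; omega) (by have := i.isLt; omega)
              (by omega) (by have := i.isLt; omega) rfl
            rw [pval (k - j - 1 + ↑i.castSucc)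
                  (by have := i.isLt; simp only [Fin.coe_castSucc]; omega)
                  ⟨k - j - 1 + i.val, by have := i.isLt; omega⟩
                  (by show k-j-1+(i:ℕ) = k-j-1+(i:ℕ); rfl),
                pval (k - j - 1 + ↑i.succ)
                  (by have := i.isLt; simp only [Fin.val_succ]; omega)
                  ⟨k - j - 1 + i.val + 1, by have := i.isLt; omega⟩
                  (by show k-j-1+((i:ℕ)+1) = k-j-1+(i:ℕ)+1; omega)]
            exact hh
      refine ⟨?_, ?_⟩
      · rw [pval (k - (j+1)) (by omega) ⟨k - j - 1, by omega⟩ (by show k-(j+1) = k-j-1; omega)]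
        exact hprev
      · intro a b ha hb h1 h2 h3
        rcases Nat.lt_or_ge a (k - j) with hcase | hcase
        · rw [pval a ha ⟨k - j - 1, by omega⟩ (by show a = k-j-1; omega),
              pval b hb ⟨k - j, by omega⟩ (by show b = k-j; omega)]
          exact hpnY
        · exact harcs a b ha hb hcase h2 h3
  have noXT : ¬ ResidualPath c f (X ∩ Y) T := by
    rintro ⟨k, p, h0, hl, hr⟩
    have hk := (key2 k p hl hr k le_rfl).1
    apply hk
    have e : p (⟨k - k, by omega⟩ : Fin (k+1)) = p 0 := by
      congr 1
      exact Fin.ext (by simp)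
    rw [e]
    exact h0.1
  refine ⟨⟨?_, ?_⟩, ?_, ?_, ?_, ?_⟩
  · intro u v
    have := hXcap u v; have := hYcap u v
    show fX u v + fY u v ≤ cX u v + cY u v
    linarith
  · intro u v
    have := hXanti u v; have := hYanti u v
    show fX u v + fY u v = -(fX v u + fY v u)
    linarith
  · intro v hv
    have e : exc (fun u v => fX u v + fY u v) v = exc fX v + exc fY v := by
      unfold exc
      rw [Finset.sum_add_distrib]
    simp only [Set.mem_union, not_or] at hv
    have hv1 : v ∉ S ∪ X ∩ Y := by
      simp only [Set.mem_union, not_or]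
      exact ⟨hv.1.1, hv.1.2⟩
    have hv2 : v ∉ X ∩ Y ∪ T := by
      simp only [Set.mem_union, not_or]
      exact ⟨hv.1.2, hv.2⟩
    rw [e, hXexc v hv1, hYexc v hv2]
    ring
  · exact noSY (X ∩ Y) Set.inter_subset_right
  · exact noXT
  · exact noSY T (fun v hv => (hT hv).1)
end

section
/- Let P ⊆ V, let S₀, T₀ ⊆ P be disjoint, and let f be a flow from S₀ to T₀ with respect to the capacity function c. Define g : V × V → ℝ by g(u,v) = 0 if both u ∈ P and v ∈ P, and g(u,v) = f(u,v) otherwise. Then g is a pseudoflow with respect to c, and exc_g(v) = 0 for every vertex v ∉ P; consequently g is a flow from {v ∈ P : exc_g(v) > 0} to {v ∈ P : exc_g(v) < 0} with respect to c. -/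
open scoped Classical

theorem restrict_flow_outside {V : Type*} [Fintype V]
    (c f g : V → V → ℝ) (P S₀ T₀ : Set V)
    (hc : ∀ u v, 0 ≤ c u v)
    (hS₀ : S₀ ⊆ P) (hT₀ : T₀ ⊆ P) (hST : Disjoint S₀ T₀)
    (hf : IsFlow c S₀ T₀ f)
    (hg : ∀ u v, g u v = if u ∈ P ∧ v ∈ P then 0 else f u v) :
    IsPseudoflow c g ∧ (∀ v, v ∉ P → exc g v = 0) ∧
    IsFlow c {v | v ∈ P ∧ 0 < exc g v} {v | v ∈ P ∧ exc g v < 0} g := by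
  obtain ⟨⟨hcap, hanti⟩, hexc⟩ := hf
  have hpseudo : IsPseudoflow c g := by
    constructor
    · intro u v
      rw [hg]
      split
      · exact hc u v
      · exact hcap u v
    · intro u v
      rw [hg, hg]
      by_cases h : u ∈ P ∧ v ∈ P
      · simp [h, h.1, h.2, and_comm]
      · have h' : ¬ (v ∈ P ∧ u ∈ P) := fun hh => h ⟨hh.2, hh.1⟩
        simp [h, h', hanti u v]
  have hout : ∀ v, v ∉ P → exc g v = 0 := by
    intro v hv
    have : exc g v = exc f v := by
      unfold exc
      apply Finset.sum_congr rfl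
      intro u _
      rw [hg]
      exact if_neg (fun h => hv h.2)
    rw [this]
    exact hexc v (by
      intro h
      rcases h with h | h
      · exact hv (hS₀ h)
      · exact hv (hT₀ h))
  refine ⟨hpseudo, hout, hpseudo, ?_⟩
  intro v hv
  by_cases hvP : v ∈ P
  · simp only [Set.mem_union, Set.mem_setOf_eq] at hv
    push_neg at hv
    have h1 := hv.1 hvP
    have h2 := hv.2 hvP
    linarith
  · exact hout v hvP
end
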